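/- Let Σ_{n≥0} κ_n q^n be the unique formal power series over ℝ satisfying q·f² − (q³ + 2q − 1)·f − 1 = 0. For every real q with 0 < q < R_{√2}, the series Σ_{n≥0} κ_n q^n converges and its sum equals (q³ + 2q − 1 + √((q⁴ + q³ + 4q² + q + 1)(q² − q + 1))) / (2q). -/

import Mathlib

/-- `R_{√2} = (1 + √2 − √(2√2 − 1))/2`. -/
noncomputable def Rsqrt2 : ℝ := (1 + Real.sqrt 2 - Real.sqrt (2 * Real.sqrt 2 - 1)) / 2

/-!
Write `P = z³ + 2z − 1` and `D = P² + 4z`. Since `R + R⁻¹ = 1 + √2` for `R = R_{√2}`, the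
discriminant factors as `D = (z² − z + 1)(z² + cRz + R²)(z² + cR⁻¹z + R⁻²)` with `c = √2 − 1`.
A quadratic `z² + βtz + t²` with `β² < 4` stays off the closed negative real axis on `‖z‖ < t`,
so the product of the three principal square roots is a holomorphic square root of `D` on the
disc of radius `R`, and `G = 2 / (√D − P)` is a holomorphic solution of `zG² − PG − 1 = 0`
there. By the Cauchy product and uniqueness of power series expansions, the Taylor series of `G`
solves the formal equation, whose solution is unique since `(F − F')(X(F + F') − P) = 0` and the
second factor has constant coefficient `1`. Hence `∑ κₙ qⁿ = G(q) = (P + √D) / (2q)`.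
-/

open PowerSeries

theorem Polynomial.hasSum_coeff_coe_mul_pow {R : Type*} [CommSemiring R] [TopologicalSpace R]
    (p : Polynomial R) (z : R) :
    HasSum (fun n ↦ PowerSeries.coeff n (p : R⟦X⟧) * z ^ n) (p.eval z) := by
  simp only [Polynomial.coeff_coe, Polynomial.eval_eq_sum_range]
  exact hasSum_sum_of_ne_finset_zero fun n hn ↦ by
    rw [Polynomial.coeff_eq_zero_of_natDegree_lt (by simpa using hn), zero_mul]

namespace PowerSeries

theorem eq_of_X_mul_sq_sub_mul_sub_eq_zero {R : Type*} [CommRing R] [IsDomain R]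
    {P Q F F' : R⟦X⟧} (hP : constantCoeff P ≠ 0)
    (hF : X * F ^ 2 - P * F - Q = 0) (hF' : X * F' ^ 2 - P * F' - Q = 0) : F = F' := by
  have hfactor : (F - F') * (X * (F + F') - P) = 0 := by linear_combination hF - hF'
  have hne : X * (F + F') - P ≠ 0 := fun h ↦ hP <| by simpa using congrArg constantCoeff h
  exact sub_eq_zero.mp ((mul_eq_zero.mp hfactor).resolve_right hne)

section Summation

variable {𝕜 : Type*} [RCLike 𝕜] {F G : 𝕜⟦X⟧} {z a b : 𝕜}

theorem hasSum_coeff_mul (hF : HasSum (fun n ↦ coeff n F * z ^ n) a)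
    (hG : HasSum (fun n ↦ coeff n G * z ^ n) b) :
    HasSum (fun n ↦ coeff n (F * G) * z ^ n) (a * b) := by
  have hF' := summable_norm_iff.mpr hF.summable
  have hG' := summable_norm_iff.mpr hG.summable
  have hcauchy : (fun n ↦ coeff n (F * G) * z ^ n) = fun n ↦
      ∑ kl ∈ Finset.HasAntidiagonal.antidiagonal n,
        (coeff kl.1 F * z ^ kl.1) * (coeff kl.2 G * z ^ kl.2) := by
    ext n
    rw [coeff_mul, Finset.sum_mul]
    refine Finset.sum_congr rfl fun kl hkl ↦ ?_
    rw [← Finset.HasAntidiagonal.mem_antidiagonal.mp hkl, pow_add]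
    ring
  rw [hcauchy, ← hF.tsum_eq, ← hG.tsum_eq,
    tsum_mul_tsum_eq_tsum_sum_antidiagonal_of_summable_norm hF' hG']
  exact (summable_norm_sum_mul_antidiagonal_of_summable_norm hF' hG').of_norm.hasSum

theorem hasSum_coeff_X_mul_sq_sub_mul_sub_one (hF : HasSum (fun n ↦ coeff n F * z ^ n) a) :
    HasSum (fun n ↦ coeff n (X * F ^ 2 - (X ^ 3 + 2 * X - 1) * F - 1) * z ^ n)
      (z * a ^ 2 - (z ^ 3 + 2 * z - 1) * a - 1) := by
  have hX := Polynomial.hasSum_coeff_coe_mul_pow Polynomial.X z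
  have h1 := Polynomial.hasSum_coeff_coe_mul_pow 1 z
  have hP := Polynomial.hasSum_coeff_coe_mul_pow (Polynomial.X ^ 3 + 2 * Polynomial.X - 1) z
  rw [← Polynomial.coeToPowerSeries.ringHom_apply, map_sub, map_add, map_mul, map_pow, map_ofNat,
    map_one, Polynomial.coeToPowerSeries.ringHom_apply, Polynomial.coe_X] at hP
  rw [Polynomial.coe_X, Polynomial.eval_X] at hX
  rw [Polynomial.coe_one, Polynomial.eval_one] at h1
  simpa only [sq, map_sub, sub_mul, Polynomial.eval_sub, Polynomial.eval_add, Polynomial.eval_mul,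
    Polynomial.eval_pow, Polynomial.eval_ofNat, Polynomial.eval_X, Polynomial.eval_one] using
    ((hasSum_coeff_mul hX (hasSum_coeff_mul hF hF)).sub (hasSum_coeff_mul hP hF)).sub h1

theorem eq_zero_of_hasSum_zero {r : ℝ} (hr : 0 < r)
    (h : ∀ z : 𝕜, ‖z‖ < r → HasSum (fun n ↦ coeff n F * z ^ n) 0) : F = 0 := by
  obtain ⟨ρ, hρ, hρr⟩ := exists_between hr
  lift ρ to NNReal using hρ.le
  set p := FormalMultilinearSeries.ofScalars 𝕜 fun n ↦ coeff n F
  have hp : HasFPowerSeriesOnBall (0 : 𝕜 → 𝕜) p 0 ρ := by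
    refine ⟨p.le_radius_of_summable ?_, by simpa using hρ, fun {y} hy ↦ ?_⟩
    · have := summable_norm_iff.mpr (h ((ρ : ℝ) : 𝕜) (by simpa using hρr)).summable
      simpa [p, FormalMultilinearSeries.ofScalars_norm] using this
    · have hy : ‖y‖ < r := by
        simp only [Metric.eball_coe, Metric.mem_ball, dist_zero_right] at hy
        exact hy.trans hρr
      simpa [p, FormalMultilinearSeries.ofScalars_apply_eq, mul_comm] using h y hy
  ext n
  simpa [p] using congrFun hp.hasFPowerSeriesAt.eq_zero n

end Summation

end PowerSeries

namespace Complex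

noncomputable def taylorPowerSeries (f : ℂ → ℂ) : ℂ⟦X⟧ :=
  PowerSeries.mk fun n ↦ (n.factorial : ℂ)⁻¹ * iteratedDeriv n f 0

theorem hasSum_coeff_taylorPowerSeries {f : ℂ → ℂ} {r : ℝ}
    (hf : DifferentiableOn ℂ f (Metric.ball 0 r)) {z : ℂ} (hz : ‖z‖ < r) :
    HasSum (fun n ↦ coeff n (taylorPowerSeries f) * z ^ n) (f z) := by
  simpa [taylorPowerSeries, mul_comm, mul_left_comm] using
    hasSum_taylorSeries_on_ball hf (by simpa using hz)

theorem quadratic_mem_slitPlane {β t : ℝ} (hβ : β ^ 2 < 4) {z : ℂ} (hz : ‖z‖ < t) :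
    z ^ 2 + β * t * z + t ^ 2 ∈ slitPlane := by
  have ht : 0 < t := (norm_nonneg z).trans_lt hz
  have hz2 : z.re ^ 2 + z.im ^ 2 < t ^ 2 := by
    rw [sq z.re, sq z.im, ← normSq_apply, ← Complex.sq_norm]
    exact pow_lt_pow_left₀ hz (norm_nonneg z) two_ne_zero
  rw [mem_slitPlane_iff]
  by_contra! hcon
  obtain ⟨hre, him⟩ := hcon
  simp only [add_re, add_im, mul_re, mul_im, pow_two, ofReal_re, ofReal_im, mul_zero, zero_mul,
    sub_zero, add_zero] at hre him
  rcases mul_eq_zero.mp (show z.im * (2 * z.re + β * t) = 0 by linear_combination him) with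
    hy | hx
  · nlinarith [sq_nonneg (2 * z.re + β * t), mul_pos ht ht]
  · have : β * t * z.re = -2 * z.re ^ 2 := by linear_combination z.re * hx
    nlinarith

end Complex

noncomputable def sqrtQuad (β t : ℝ) (z : ℂ) : ℂ := (z ^ 2 + β * t * z + t ^ 2) ^ (2⁻¹ : ℂ)

section SqrtQuad

variable {β t : ℝ}

theorem sqrtQuad_sq (β t : ℝ) (z : ℂ) : sqrtQuad β t z ^ 2 = z ^ 2 + β * t * z + t ^ 2 :=
  Complex.cpow_ofNat_inv_pow _ 2

theorem differentiableAt_sqrtQuad (hβ : β ^ 2 < 4) {z : ℂ} (hz : ‖z‖ < t) :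
    DifferentiableAt ℂ (sqrtQuad β t) z :=
  DifferentiableAt.cpow_const (by fun_prop) (Complex.quadratic_mem_slitPlane hβ hz)

theorem sqrtQuad_ofReal (hβ : β ^ 2 ≤ 4) (x : ℝ) :
    sqrtQuad β t x = √(x ^ 2 + β * t * x + t ^ 2) := by
  have hnonneg : 0 ≤ x ^ 2 + β * t * x + t ^ 2 := by
    nlinarith [sq_nonneg (2 * x + β * t), sq_nonneg t]
  rw [Real.sqrt_eq_rpow, Complex.ofReal_cpow hnonneg, sqrtQuad]
  norm_num

end SqrtQuad

theorem sqrt_two_sub_one_sq_lt_four : (√2 - 1) ^ 2 < 4 := by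
  nlinarith [Real.sq_sqrt zero_le_two, Real.sqrt_nonneg 2]

theorem Rsqrt2_mem_Ioc : Rsqrt2 ∈ Set.Ioc 0 1 := by
  have h2 : √2 ^ 2 = 2 := Real.sq_sqrt zero_le_two
  have hv : √(2 * √2 - 1) ^ 2 = 2 * √2 - 1 := Real.sq_sqrt (by nlinarith [Real.sqrt_nonneg 2])
  rw [Rsqrt2]
  constructor <;> nlinarith [Real.sqrt_nonneg 2, Real.sqrt_nonneg (2 * √2 - 1)]

theorem Rsqrt2_pos : 0 < Rsqrt2 := Rsqrt2_mem_Ioc.1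

theorem Rsqrt2_add_inv : Rsqrt2 + Rsqrt2⁻¹ = 1 + √2 := by
  have h2 : √2 ^ 2 = 2 := Real.sq_sqrt zero_le_two
  have hv : √(2 * √2 - 1) ^ 2 = 2 * √2 - 1 := Real.sq_sqrt (by nlinarith [Real.sqrt_nonneg 2])
  have hR := Rsqrt2_pos.ne'
  field_simp
  rw [Rsqrt2]
  linear_combination (1 / 4 : ℝ) * hv - (1 / 4 : ℝ) * h2

theorem quartic_eq_mul_quadratics {A : Type*} [CommRing A] {a b u : A} (hu : u ^ 2 = 2)
    (hsum : a + b = 1 + u) (hprod : a * b = 1) (z : A) :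
    z ^ 4 + z ^ 3 + 4 * z ^ 2 + z + 1 =
      (z ^ 2 + (u - 1) * a * z + a ^ 2) * (z ^ 2 + (u - 1) * b * z + b ^ 2) := by
  have h3 : (u - 1) * (a + b) = 1 := by linear_combination (u - 1) * hsum + hu
  have h2 : a ^ 2 + b ^ 2 + (u - 1) ^ 2 * (a * b) = 4 := by
    linear_combination (a + b + 1 + u) * hsum + ((u - 1) ^ 2 - 2) * hprod + 2 * hu
  linear_combination -(z ^ 3 * h3 + z ^ 2 * h2 + z * (a * b * h3 + hprod) + (a * b + 1) * hprod)

noncomputable def sqrtDiscr (z : ℂ) : ℂ :=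
  sqrtQuad (-1) 1 z * sqrtQuad (√2 - 1) Rsqrt2 z * sqrtQuad (√2 - 1) Rsqrt2⁻¹ z

theorem sqrtDiscr_sq (z : ℂ) : sqrtDiscr z ^ 2 = (z ^ 3 + 2 * z - 1) ^ 2 + 4 * z := by
  have hquartic := quartic_eq_mul_quadratics (a := (Rsqrt2 : ℂ)) (b := (Rsqrt2⁻¹ : ℝ))
    (u := (√2 : ℝ)) (by norm_cast; exact Real.sq_sqrt zero_le_two)
    (by exact_mod_cast Rsqrt2_add_inv) (by norm_cast; exact mul_inv_cancel₀ Rsqrt2_pos.ne') z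
  rw [sqrtDiscr, mul_pow, mul_pow, sqrtQuad_sq, sqrtQuad_sq, sqrtQuad_sq]
  push_cast at hquartic ⊢
  linear_combination -(z ^ 2 - z + 1) * hquartic

theorem sqrtDiscr_ofReal (x : ℝ) : sqrtDiscr x = √((x ^ 3 + 2 * x - 1) ^ 2 + 4 * x) := by
  have hsq := sqrtDiscr_sq x
  simp only [sqrtDiscr, sqrtQuad_ofReal (show (-1 : ℝ) ^ 2 ≤ 4 by norm_num),
    sqrtQuad_ofReal sqrt_two_sub_one_sq_lt_four.le] at hsq ⊢
  norm_cast at hsq ⊢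
  rw [← hsq, Real.sqrt_sq (by positivity)]

theorem differentiableAt_sqrtDiscr {z : ℂ} (hz : ‖z‖ < Rsqrt2) :
    DifferentiableAt ℂ sqrtDiscr z := by
  have hR := Rsqrt2_mem_Ioc.2
  have hRinv : 1 ≤ Rsqrt2⁻¹ := one_le_inv₀ Rsqrt2_pos |>.mpr hR
  exact ((differentiableAt_sqrtQuad (by norm_num) (by linarith)).mul
    (differentiableAt_sqrtQuad sqrt_two_sub_one_sq_lt_four hz)).mul
    (differentiableAt_sqrtQuad sqrt_two_sub_one_sq_lt_four (by linarith))

theorem sqrtDiscr_sub_ne_zero (z : ℂ) : sqrtDiscr z - (z ^ 3 + 2 * z - 1) ≠ 0 := by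
  intro h
  have hz : z = 0 := by
    have := sqrtDiscr_sq z
    rw [sub_eq_zero.mp h] at this
    linear_combination -this / 4
  have h0 : sqrtDiscr 0 = 1 := by simpa using sqrtDiscr_ofReal 0
  rw [hz, h0] at h
  norm_num at h

/-- The branch `(P + √D) / (2z)` of the solution, written so that it is visibly regular at `0`. -/
noncomputable def kappaGen (z : ℂ) : ℂ := 2 / (sqrtDiscr z - (z ^ 3 + 2 * z - 1))

theorem differentiableOn_kappaGen : DifferentiableOn ℂ kappaGen (Metric.ball 0 Rsqrt2) :=
  fun z hz ↦ ((differentiableAt_const 2).div ((differentiableAt_sqrtDiscr (by simpa using hz)).sub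
    (by fun_prop)) (sqrtDiscr_sub_ne_zero z)).differentiableWithinAt

theorem kappaGen_functional_eq (z : ℂ) :
    z * kappaGen z ^ 2 - (z ^ 3 + 2 * z - 1) * kappaGen z - 1 = 0 := by
  have hd := sqrtDiscr_sub_ne_zero z
  have hG : kappaGen z * (sqrtDiscr z - (z ^ 3 + 2 * z - 1)) = 2 := div_mul_cancel₀ _ hd
  refine mul_left_cancel₀ (pow_ne_zero 2 hd) ?_
  linear_combination (z * (kappaGen z * (sqrtDiscr z - (z ^ 3 + 2 * z - 1)))
    - (z ^ 3 + 2 * z - 1) * (sqrtDiscr z - (z ^ 3 + 2 * z - 1)) + 2 * z) * hG - sqrtDiscr_sq z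

theorem kappaGen_ofReal {q : ℝ} (hq : 0 < q) :
    kappaGen q = ((q ^ 3 + 2 * q - 1 +
      √((q ^ 4 + q ^ 3 + 4 * q ^ 2 + q + 1) * (q ^ 2 - q + 1))) / (2 * q) : ℝ) := by
  have hD : (q ^ 4 + q ^ 3 + 4 * q ^ 2 + q + 1) * (q ^ 2 - q + 1) =
      (q ^ 3 + 2 * q - 1) ^ 2 + 4 * q := by ring
  have hsq := Real.sq_sqrt (show 0 ≤ (q ^ 3 + 2 * q - 1) ^ 2 + 4 * q by positivity)
  have hden : 0 < √((q ^ 3 + 2 * q - 1) ^ 2 + 4 * q) - (q ^ 3 + 2 * q - 1) := by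
    nlinarith [Real.sqrt_nonneg ((q ^ 3 + 2 * q - 1) ^ 2 + 4 * q)]
  rw [hD, kappaGen, sqrtDiscr_ofReal]
  norm_cast
  rw [div_eq_div_iff hden.ne' (by positivity)]
  linear_combination -hsq

theorem qSqrtTwoPlusOne_sum_formula
    (f : PowerSeries ℝ)
    (hf : PowerSeries.X * f ^ 2 - (PowerSeries.X ^ 3 + 2 * PowerSeries.X - 1) * f - 1 = 0) :
    ∀ q : ℝ, 0 < q → q < Rsqrt2 →
      HasSum (fun n : ℕ => PowerSeries.coeff n f * q ^ n)
        ((q ^ 3 + 2 * q - 1 +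
            Real.sqrt ((q ^ 4 + q ^ 3 + 4 * q ^ 2 + q + 1) * (q ^ 2 - q + 1))) / (2 * q)) := by
  intro q hq hqR
  set F := Complex.taylorPowerSeries kappaGen
  have hF : ∀ z : ℂ, ‖z‖ < Rsqrt2 → HasSum (fun n ↦ coeff n F * z ^ n) (kappaGen z) :=
    fun z hz ↦ Complex.hasSum_coeff_taylorPowerSeries differentiableOn_kappaGen hz
  have hFeq : X * F ^ 2 - (X ^ 3 + 2 * X - 1) * F - 1 = 0 :=
    eq_zero_of_hasSum_zero Rsqrt2_pos fun z hz ↦ by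
      simpa only [kappaGen_functional_eq] using hasSum_coeff_X_mul_sq_sub_mul_sub_one (hF z hz)
  have hfF : map Complex.ofRealHom f = F := by
    refine eq_of_X_mul_sq_sub_mul_sub_eq_zero (by simp) ?_ hFeq
    simpa only [map_sub, map_mul, map_pow, map_add, map_ofNat, map_one, map_X, map_zero] using
      congrArg (map Complex.ofRealHom) hf
  have hq' := hF q (by rwa [Complex.norm_of_nonneg hq.le])
  rw [← hfF, kappaGen_ofReal hq] at hq'
  simp only [coeff_map, Complex.ofRealHom_eq_coe, ← Complex.ofReal_pow, ← Complex.ofReal_mul] at hq'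
  exact Complex.hasSum_ofReal.mp hq'
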